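/- arXiv:math/0512256 — 2 statements merged into one kernel-verified Lean document; each statement's English description precedes it below -/
import Mathlib

section
/- For integers a and b, there exists an infinite gap increasing binary word w whose subword complexity satisfies f_w(n) = an + b for all sufficiently large n if and only if a ≥ 2. -/
/-- `u` occurs in `w` starting at position `i` (positions are 1-indexed). -/
def FactorAt (w : ℕ → Fin 2) (i : ℕ) (u : List (Fin 2)) : Prop :=
  u = (List.range u.length).map (fun k => w (i + k))

def IsFactor (w : ℕ → Fin 2) (u : List (Fin 2)) : Prop :=
  ∃ i, 1 ≤ i ∧ FactorAt w i u

noncomputable def complexity (w : ℕ → Fin 2) (n : ℕ) : ℕ :=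
  Set.ncard {u : List (Fin 2) | u.length = n ∧ IsFactor w u}

/-- `G` is the 1-distribution function of `w`: `G 0 = 0` and `G i` is the
position of the `i`-th `1` of `w` (positions 1-indexed). -/
def OneDistrib (w : ℕ → Fin 2) (G : ℕ → ℕ) : Prop :=
  G 0 = 0 ∧ StrictMono G ∧ ∀ p, 1 ≤ p → (w p = 1 ↔ ∃ i, 1 ≤ i ∧ G i = p)

def gap (G : ℕ → ℕ) (i : ℕ) : ℕ := G i - G (i - 1)

def GapIncreasing (G : ℕ → ℕ) : Prop :=
  ∀ i, 1 ≤ i → gap G i < gap G (i + 1)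

def RightSpecial (w : ℕ → Fin 2) (u : List (Fin 2)) : Prop :=
  IsFactor w (u ++ [0]) ∧ IsFactor w (u ++ [1])

/-!
Write `g₀ < g₁ < ⋯` for the gaps of `w`. A factor of length `n` containing at least two 1's is
determined by the index `t` of its first 1 and the number `a` of 0's in front of it, since the
gap to its second 1 identifies `t`; such a factor exists iff `a < g_t` and `a + g_{t+1} < n`.
Adding the zero word and the `n` words with a single 1,
`f_w(n) = n + 1 + ∑_t min(g_t, n - g_{t+1})`.
The `k`-th term of the sum goes from `0` to `1` as `n` passes `g_{k+1}`, so
`f_w(n + 1) - f_w(n) ≥ 2` infinitely often and `a ≥ 2`.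
Conversely, if `g_{t+e+2} = g_t + g_{t+1}` for `t ≥ r`, then for large `n` exactly `e + 1` terms
equal `n - g_{t+1}`, the earlier ones equal `g_t` and the later ones vanish, and the recurrence
makes the resulting constant independent of `n`: `f_w(n) = (e + 2) n + b`. Starting the
recurrence from `g_t = M + t + 1` lets `b` take every integer value.
-/

open Finset

lemma StrictMono.exists_lt_le_succ {f : ℕ → ℕ} (hf : StrictMono f) {m n : ℕ} (h : f m < n) :
    ∃ y, m ≤ y ∧ f y < n ∧ n ≤ f (y + 1) := by
  classical
  have hex : ∃ z, n ≤ f z := ⟨n, hf.id_le n⟩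
  have hm : m < Nat.find hex := by
    by_contra! hle
    exact absurd ((Nat.find_spec hex).trans (hf.monotone hle)) (not_le.2 h)
  refine ⟨Nat.find hex - 1, by omega, not_le.1 (Nat.find_min hex (by omega)), ?_⟩
  rw [Nat.sub_add_cancel (by omega)]
  exact Nat.find_spec hex

def gapSum (h : ℕ → ℕ) (n : ℕ) : ℕ := ∑ t ∈ range n, min (h t) (n - h (t + 1))

def window (f : ℕ → Fin 2) (s n : ℕ) : List (Fin 2) := (List.range n).map fun k => f (s + k)

lemma window_eq_window_iff {f f' : ℕ → Fin 2} {s s' n : ℕ} :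
    window f s n = window f' s' n ↔ ∀ k < n, f (s + k) = f' (s' + k) := by
  simp [window, List.map_inj_left]

lemma setOf_isFactor_eq (w : ℕ → Fin 2) (n : ℕ) :
    {u | u.length = n ∧ IsFactor w u} = (fun s => window w s n) '' Set.Ici 1 := by
  ext u
  constructor
  · rintro ⟨rfl, s, hs, hu⟩
    exact ⟨s, hs, hu.symm⟩
  · rintro ⟨s, hs, rfl⟩
    exact ⟨by simp [window], s, hs, by simp [FactorAt, window]⟩

lemma injOn_window_single (n : ℕ) :
    Set.InjOn (fun a => window (Pi.single a 1) 0 n) (range (n + 1)) := by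
  intro a ha a' ha' heq
  simp only [coe_range, Set.mem_Iio, window_eq_window_iff] at ha ha' heq
  by_contra hne
  rcases lt_or_gt_of_ne hne with hlt | hlt
  · simpa [Pi.single_apply, hne] using heq a (by omega)
  · simpa [Pi.single_apply, Ne.symm hne] using heq a' (by omega)

/-- `⟨t, a⟩` stands for the factor of length `n` that starts `a` letters before the `(t + 1)`-th
1 and also contains the `(t + 2)`-th 1, when `h` is the sequence of gaps. -/
def pairIndex (h : ℕ → ℕ) (n : ℕ) : Finset (Σ _ : ℕ, ℕ) :=
  (range n).sigma fun t => range (min (h t) (n - h (t + 1)))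

lemma mem_pairIndex {h : ℕ → ℕ} {n t a : ℕ} :
    ⟨t, a⟩ ∈ pairIndex h n ↔ t < n ∧ a < h t ∧ a + h (t + 1) < n := by
  simp only [pairIndex, mem_sigma, mem_range]
  omega

def gaps (G : ℕ → ℕ) (t : ℕ) : ℕ := gap G (t + 1)

section OneDistrib

variable {w : ℕ → Fin 2} {G : ℕ → ℕ}

lemma OneDistrib.add_gaps (hG : OneDistrib w G) (t : ℕ) : G t + gaps G t = G (t + 1) := by
  have := hG.2.1 (lt_add_one t)
  simp only [gaps, gap, Nat.add_sub_cancel]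
  omega

lemma OneDistrib.apply_eq_one (hG : OneDistrib w G) {i : ℕ} (hi : 1 ≤ i) : w (G i) = 1 :=
  (hG.2.2 _ (hi.trans (hG.2.1.id_le i))).2 ⟨i, hi, rfl⟩

lemma OneDistrib.apply_eq_ite (hG : OneDistrib w G) {t p : ℕ} (h₁ : G t < p)
    (h₂ : p < G (t + 1 + 1)) : w p = if p = G (t + 1) then 1 else 0 := by
  split_ifs with hp
  · exact hp ▸ hG.apply_eq_one le_add_self
  · by_contra hw
    obtain ⟨i, -, rfl⟩ := (hG.2.2 p (by omega)).1 (Fin.eq_one_of_ne_zero _ hw)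
    have := hG.2.1.lt_iff_lt.1 h₁
    have := hG.2.1.lt_iff_lt.1 h₂
    exact hp (by rw [show i = t + 1 by omega])

lemma GapIncreasing.strictMono_gaps (hGI : GapIncreasing G) : StrictMono (gaps G) :=
  strictMono_nat_of_lt_succ fun t => hGI (t + 1) le_add_self

lemma OneDistrib.succ_le_gaps (hG : OneDistrib w G) (hGI : GapIncreasing G) (t : ℕ) :
    t + 1 ≤ gaps G t := by
  have h₀ := hG.add_gaps 0
  rw [zero_add] at h₀
  have h₁ := hG.2.1 (zero_lt_one' ℕ)
  have := hGI.strictMono_gaps.add_le_nat t 0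
  rw [add_zero] at this
  omega

variable (hG : OneDistrib w G)
include hG

/-- `Pi.single n 1` vanishes on the window, so the offsets `a ≤ n` cover every factor with at most
one 1, the offset `n` standing for the zero word. -/
lemma window_eq_single {t s n : ℕ} (h₁ : G t < s) (h₂ : s ≤ G (t + 1))
    (h₃ : s + n ≤ G (t + 1 + 1)) :
    window w s n = window (Pi.single (min (G (t + 1) - s) n) 1) 0 n := by
  rw [window_eq_window_iff]
  intro k hk
  rw [hG.apply_eq_ite (t := t) (by omega) (by omega), Pi.single_apply]
  split_ifs <;> first | rfl | omega

lemma le_of_window_pair_eq {n t a t' a' : ℕ} (hx : ⟨t, a⟩ ∈ pairIndex (gaps G) n)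
    (hx' : ⟨t', a'⟩ ∈ pairIndex (gaps G) n)
    (heq : ∀ k < n, w (G (t + 1) - a + k) = w (G (t' + 1) - a' + k)) :
    a ≤ a' ∧ (a = a' → gaps G (t + 1) ≤ gaps G (t' + 1)) := by
  rw [mem_pairIndex] at hx hx'
  have := hG.add_gaps t
  have := hG.add_gaps (t + 1)
  have := hG.add_gaps t'
  have := hG.add_gaps (t' + 1)
  have := hG.2.1 (lt_add_one (t' + 1))
  constructor
  · by_contra! hlt
    have h := heq a' (by omega)
    rw [hG.apply_eq_ite (t := t) (by omega) (by omega), if_neg (by omega),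
      show G (t' + 1) - a' + a' = G (t' + 1) by omega, hG.apply_eq_one le_add_self] at h
    exact absurd h (by decide)
  · rintro rfl
    by_contra! hlt
    have h := heq (a + gaps G (t' + 1)) (by omega)
    rw [hG.apply_eq_ite (t := t) (by omega) (by omega), if_neg (by omega),
      show G (t' + 1) - a + (a + gaps G (t' + 1)) = G (t' + 1 + 1) by omega,
      hG.apply_eq_one le_add_self] at h
    exact absurd h (by decide)

variable (hGI : GapIncreasing G)
include hGI

lemma image_window_eq (n : ℕ) :
    (fun s => window w s n) '' Set.Ici 1 =
      ↑((range (n + 1)).image (fun a => window (Pi.single a 1) 0 n) ∪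
        (pairIndex (gaps G) n).image fun x => window w (G (x.1 + 1) - x.2) n) := by
  have hgap := hG.add_gaps
  have hsucc := hG.succ_le_gaps hGI
  ext u
  simp only [Set.mem_image, Set.mem_Ici, coe_union, coe_image, coe_range, Set.mem_union,
    Set.mem_Iio, mem_coe]
  constructor
  · rintro ⟨s, hs, rfl⟩
    obtain ⟨t, -, h₁, h₂⟩ := hG.2.1.exists_lt_le_succ (show G 0 < s by rw [hG.1]; omega)
    have := hgap t
    have := hgap (t + 1)
    have := hsucc (t + 1)
    by_cases hpair : G (t + 1 + 1) < s + n
    · refine Or.inr ⟨⟨t, G (t + 1) - s⟩, mem_pairIndex.2 ⟨by omega, by omega, by omega⟩, ?_⟩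
      rw [Nat.sub_sub_self h₂]
    · exact Or.inl ⟨_, by omega, (window_eq_single hG h₁ h₂ (by omega)).symm⟩
  · rintro (⟨a, ha, rfl⟩ | ⟨⟨t, a⟩, hx, rfl⟩)
    · have := hgap n
      have := hgap (n + 1)
      have := hsucc n
      have := hsucc (n + 1)
      refine ⟨G (n + 1) - a, by omega, ?_⟩
      rw [window_eq_single hG (t := n) (by omega) (by omega) (by omega)]
      congr 2
      omega
    · have := hgap t
      rw [mem_pairIndex] at hx
      exact ⟨G (t + 1) - a, by omega, rfl⟩

lemma disjoint_window_single_pair (n : ℕ) :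
    Disjoint ((range (n + 1)).image fun a => window (Pi.single a 1) 0 n)
      ((pairIndex (gaps G) n).image fun x => window w (G (x.1 + 1) - x.2) n) := by
  simp only [disjoint_left, mem_image, not_exists, not_and]
  rintro _ ⟨b, -, rfl⟩ ⟨t, a⟩ hx heq
  rw [mem_pairIndex] at hx
  rw [window_eq_window_iff] at heq
  have := hG.add_gaps t
  have := hG.add_gaps (t + 1)
  have := hG.succ_le_gaps hGI (t + 1)
  have h₁ := heq a (by omega)
  have h₂ := heq (a + gaps G (t + 1)) (by omega)
  rw [show G (t + 1) - a + a = G (t + 1) by omega, hG.apply_eq_one le_add_self] at h₁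
  rw [show G (t + 1) - a + (a + gaps G (t + 1)) = G (t + 1 + 1) by omega,
    hG.apply_eq_one le_add_self] at h₂
  simp only [Pi.single_apply, zero_add] at h₁ h₂
  split_ifs at h₁ h₂ <;> omega

lemma injOn_window_pair (n : ℕ) :
    Set.InjOn (fun x : Σ _ : ℕ, ℕ => window w (G (x.1 + 1) - x.2) n) (pairIndex (gaps G) n) := by
  rintro ⟨t, a⟩ hx ⟨t', a'⟩ hx' heq
  simp only [window_eq_window_iff] at heq
  obtain ⟨ha, hg⟩ := le_of_window_pair_eq hG hx hx' heq
  obtain ⟨ha', hg'⟩ := le_of_window_pair_eq hG hx' hx fun k hk => (heq k hk).symm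
  obtain rfl := le_antisymm ha ha'
  have := hGI.strictMono_gaps.injective (le_antisymm (hg rfl) (hg' rfl))
  obtain rfl : t = t' := by omega
  rfl

theorem complexity_eq (n : ℕ) : complexity w n = n + 1 + gapSum (gaps G) n := by
  rw [complexity, setOf_isFactor_eq, image_window_eq hG hGI, Set.ncard_coe_finset,
    card_union_of_disjoint (disjoint_window_single_pair hG hGI n),
    card_image_of_injOn (injOn_window_single n), card_image_of_injOn (injOn_window_pair hG hGI n),
    card_range, pairIndex, card_sigma]
  simp [gapSum]

end OneDistrib

section gapSum

variable {h : ℕ → ℕ}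

lemma gapSum_lt_gapSum_succ (hh : StrictMono h) {k : ℕ} (hk : 0 < h k) :
    gapSum h (h (k + 1)) < gapSum h (h (k + 1) + 1) := by
  set m := h (k + 1)
  have hkm : k < m := hh.id_le (k + 1)
  calc gapSum h m < ∑ t ∈ range m, min (h t) (m + 1 - h (t + 1)) :=
        sum_lt_sum (fun t _ => by omega) ⟨k, mem_range.2 hkm, by omega⟩
    _ ≤ gapSum h (m + 1) := by
        rw [gapSum, sum_range_succ]
        exact Nat.le_add_right _ _

lemma exists_complexity_add_two_le {w : ℕ → Fin 2} {G : ℕ → ℕ} (hG : OneDistrib w G)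
    (hGI : GapIncreasing G) (N : ℕ) : ∃ n ≥ N, complexity w n + 2 ≤ complexity w (n + 1) := by
  have := hG.succ_le_gaps hGI N
  have := hG.succ_le_gaps hGI (N + 1)
  have := gapSum_lt_gapSum_succ hGI.strictMono_gaps (k := N) (by omega)
  refine ⟨gaps G (N + 1), by omega, ?_⟩
  rw [complexity_eq hG hGI, complexity_eq hG hGI]
  omega

def partialSums (h : ℕ → ℕ) (i : ℕ) : ℕ := ∑ t ∈ range i, h t

lemma partialSums_succ (h : ℕ → ℕ) (i : ℕ) : partialSums h (i + 1) = partialSums h i + h i :=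
  sum_range_succ h i

def gapSumConst (h : ℕ → ℕ) (e x : ℕ) : ℤ :=
  partialSums h x + partialSums h (x + 1) - partialSums h (x + e + 2)

variable {e r : ℕ} (hrec : ∀ t, r ≤ t → h (t + e + 2) = h t + h (t + 1))
include hrec

lemma gapSumConst_eq {x : ℕ} (hx : r ≤ x) : gapSumConst h e x = gapSumConst h e r := by
  induction x, hx using Nat.le_induction with
  | base => rfl
  | succ x hx ih =>
    rw [← ih, gapSumConst, gapSumConst, show x + 1 + e + 2 = x + e + 2 + 1 by omega,
      partialSums_succ h (x + e + 2), partialSums_succ h (x + 1), partialSums_succ h x, hrec x hx]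
    push_cast
    ring

lemma gapSum_eq_partialSums_add (hh : StrictMono h) {x n : ℕ} (hx : r < x)
    (h₁ : h (x + e + 1) < n) (h₂ : n ≤ h (x + e + 2)) :
    gapSum h n = partialSums h x + ∑ t ∈ Ico x (x + e + 1), (n - h (t + 1)) := by
  have hlow : ∀ t ∈ Ico 0 x, min (h t) (n - h (t + 1)) = h t := by
    intro t ht
    have := hrec (x - 1) (by omega)
    rw [show x - 1 + e + 2 = x + e + 1 by omega, show x - 1 + 1 = x by omega] at this
    have : h t ≤ h (x - 1) := hh.monotone (by simp at ht; omega)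
    have : h (t + 1) ≤ h x := hh.monotone (by simp at ht; omega)
    omega
  have hmid : ∀ t ∈ Ico x (x + e + 1), min (h t) (n - h (t + 1)) = n - h (t + 1) := by
    intro t ht
    rw [mem_Ico] at ht
    have := hrec t (by omega)
    have : h (x + e + 2) ≤ h (t + e + 2) := hh.monotone (by omega)
    omega
  have hhigh : ∀ t ∈ Ico (x + e + 1) n, min (h t) (n - h (t + 1)) = 0 := by
    intro t ht
    have : h (x + e + 2) ≤ h (t + 1) := hh.monotone (by simp at ht; omega)
    omega
  have hxn : x + e + 1 ≤ n := (hh.id_le _).trans h₁.le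
  rw [gapSum, range_eq_Ico, ← sum_Ico_consecutive _ (Nat.zero_le x) (by omega : x ≤ n),
    ← sum_Ico_consecutive _ (by omega : x ≤ x + e + 1) hxn, sum_congr rfl hlow,
    sum_congr rfl hmid, sum_congr rfl hhigh, sum_const_zero, add_zero, partialSums, range_eq_Ico]

lemma gapSum_eq_of_lt_of_le (hh : StrictMono h) {x n : ℕ} (hx : r < x)
    (h₁ : h (x + e + 1) < n) (h₂ : n ≤ h (x + e + 2)) :
    (gapSum h n : ℤ) = (e + 1) * n + gapSumConst h e x := by
  have hcast : ∀ t ∈ Ico x (x + e + 1), ((n - h (t + 1) : ℕ) : ℤ) = n - h (t + 1) := by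
    intro t ht
    have : h (t + 1) ≤ h (x + e + 1) := hh.monotone (by simp at ht; omega)
    push_cast [show h (t + 1) ≤ n by omega]
    rfl
  rw [gapSum_eq_partialSums_add hrec hh hx h₁ h₂, Nat.cast_add, Nat.cast_sum, sum_congr rfl hcast,
    sum_sub_distrib, sum_const, Nat.card_Ico, sum_Ico_add' (fun t => (h t : ℤ)),
    sum_Ico_eq_sub _ (by omega), show x + e + 1 - x = e + 1 by omega, gapSumConst]
  simp only [partialSums]
  push_cast
  ring

theorem gapSum_eq (hh : StrictMono h) {n : ℕ} (hn : h (r + e + 2) < n) :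
    (gapSum h n : ℤ) = (e + 1) * n + gapSumConst h e r := by
  obtain ⟨y, hy, h₁, h₂⟩ := hh.exists_lt_le_succ hn
  obtain ⟨x, rfl⟩ : ∃ x, y = x + e + 1 := ⟨y - e - 1, by omega⟩
  rw [gapSum_eq_of_lt_of_le hrec hh (by omega) h₁ h₂, gapSumConst_eq hrec (by omega)]

end gapSum

open Classical in
noncomputable def wordOfGaps (h : ℕ → ℕ) (p : ℕ) : Fin 2 :=
  if ∃ i, 1 ≤ i ∧ partialSums h i = p then 1 else 0

section wordOfGaps

variable {h : ℕ → ℕ}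

lemma gaps_partialSums (h : ℕ → ℕ) : gaps (partialSums h) = h :=
  funext fun t => by simp [gaps, gap, partialSums_succ]

lemma oneDistrib_wordOfGaps (hpos : ∀ t, 0 < h t) : OneDistrib (wordOfGaps h) (partialSums h) :=
  ⟨sum_range_zero h, strictMono_nat_of_lt_succ fun i => by simpa [partialSums_succ] using hpos i,
    fun p _ => by unfold wordOfGaps; split_ifs with hp <;> simp [hp]⟩

lemma gapIncreasing_partialSums (hh : StrictMono h) : GapIncreasing (partialSums h) := by
  intro i hi
  obtain ⟨t, rfl⟩ := Nat.exists_eq_add_of_le' hi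
  have := hh (lt_add_one t)
  rwa [← gaps_partialSums h] at this

lemma complexity_wordOfGaps (hh : StrictMono h) (h₀ : 0 < h 0) (n : ℕ) :
    complexity (wordOfGaps h) n = n + 1 + gapSum h n := by
  have hpos t : 0 < h t := h₀.trans_le (hh.monotone t.zero_le)
  rw [complexity_eq (oneDistrib_wordOfGaps hpos) (gapIncreasing_partialSums hh), gaps_partialSums]

end wordOfGaps

def gapSeq (M r e : ℕ) : ℕ → ℕ
  | t => if t ≤ r + e + 1 then M + t + 1 else gapSeq M r e (t - e - 2) + gapSeq M r e (t - e - 1)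
  termination_by t => t
  decreasing_by all_goals omega

section gapSeq

variable {M r e : ℕ}

lemma gapSeq_of_le {t : ℕ} (ht : t ≤ r + e + 1) : gapSeq M r e t = M + t + 1 := by
  rw [gapSeq, if_pos ht]

lemma gapSeq_add {t : ℕ} (ht : r ≤ t) :
    gapSeq M r e (t + e + 2) = gapSeq M r e t + gapSeq M r e (t + 1) := by
  rw [gapSeq, if_neg (by omega), show t + e + 2 - e - 2 = t by omega,
    show t + e + 2 - e - 1 = t + 1 by omega]

lemma gapSeq_strictMono (hMr : e ≤ M + r) : StrictMono (gapSeq M r e) := by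
  refine strictMono_nat_of_lt_succ fun t => ?_
  induction t using Nat.strong_induction_on with
  | _ t ih =>
    rcases lt_trichotomy (t + 1) (r + e + 2) with ht | ht | ht
    · rw [gapSeq_of_le (by omega), gapSeq_of_le (by omega)]
      omega
    · obtain rfl : t = r + e + 1 := by omega
      rw [gapSeq_of_le le_rfl, gapSeq_add le_rfl, gapSeq_of_le (by omega), gapSeq_of_le (by omega)]
      omega
    · obtain ⟨u, rfl⟩ : ∃ u, t = u + e + 2 := ⟨t - e - 2, by omega⟩
      rw [gapSeq_add (by omega), show u + e + 2 + 1 = u + 1 + e + 2 by omega,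
        gapSeq_add (by omega)]
      have := ih u (by omega)
      have := ih (u + 1) (by omega)
      omega

lemma two_mul_partialSums_gapSeq {x : ℕ} (hx : x ≤ r + e + 2) :
    2 * partialSums (gapSeq M r e) x = 2 * x * M + x * (x + 1) := by
  induction x with
  | zero => simp [partialSums]
  | succ x ih =>
    rw [partialSums_succ, mul_add, ih (by omega), gapSeq_of_le (by omega)]
    ring

lemma two_mul_gapSumConst_gapSeq :
    2 * gapSumConst (gapSeq M r e) e r = 2 * ((r : ℤ) - e - 1) * M + r * (r + 1) +
      (r + 1) * (r + 2) - (r + e + 2) * (r + e + 3) := by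
  have h₀ := two_mul_partialSums_gapSeq (M := M) (r := r) (e := e) (x := r) (by omega)
  have h₁ := two_mul_partialSums_gapSeq (M := M) (r := r) (e := e) (x := r + 1) (by omega)
  have h₂ := two_mul_partialSums_gapSeq (M := M) (r := r) (e := e) (x := r + e + 2) le_rfl
  rw [gapSumConst]
  zify at h₀ h₁ h₂
  linear_combination h₀ + h₁ - h₂

end gapSeq

lemma exists_gapSumConst_gapSeq_eq (e : ℕ) (c : ℤ) :
    ∃ M r, e ≤ M + r ∧ gapSumConst (gapSeq M r e) e r = c := by
  -- the constant has slope `r - e - 1` in `M`: `r = e + 2` reaches all large `c`, `r = e` all small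
  rcases le_or_gt (-((e : ℤ) ^ 2 + 3 * e + 1)) c with hc | hc
  · refine ⟨(c + e ^ 2 + 3 * e + 1).toNat, e + 2, by omega, ?_⟩
    have h := two_mul_gapSumConst_gapSeq (M := (c + e ^ 2 + 3 * e + 1).toNat) (r := e + 2) (e := e)
    rw [Int.toNat_of_nonneg (by linarith)] at h
    push_cast at h
    linarith
  · refine ⟨(-c - (e + 1) * (e + 2)).toNat, e, by omega, ?_⟩
    have h := two_mul_gapSumConst_gapSeq (M := (-c - (e + 1) * (e + 2)).toNat) (r := e) (e := e)
    rw [Int.toNat_of_nonneg (by nlinarith)] at h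
    linarith

theorem stmt16 (a b : ℤ) :
    (∃ (w : ℕ → Fin 2) (G : ℕ → ℕ), OneDistrib w G ∧ GapIncreasing G ∧
      ∃ N : ℕ, ∀ n : ℕ, N ≤ n → (complexity w n : ℤ) = a * n + b) ↔ 2 ≤ a := by
  constructor
  · rintro ⟨w, G, hG, hGI, N, hN⟩
    obtain ⟨n, hn, hle⟩ := exists_complexity_add_two_le hG hGI N
    have h₁ := hN n hn
    have h₂ := hN (n + 1) (by omega)
    have : (complexity w n : ℤ) + 2 ≤ complexity w (n + 1) := by exact_mod_cast hle
    push_cast at h₂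
    linarith
  · intro ha
    obtain ⟨e, rfl⟩ : ∃ e : ℕ, a = e + 2 := ⟨(a - 2).toNat, by omega⟩
    obtain ⟨M, r, hMr, hC⟩ := exists_gapSumConst_gapSeq_eq e (b - 1)
    have hmono := gapSeq_strictMono hMr
    have h₀ : 0 < gapSeq M r e 0 := by rw [gapSeq_of_le (by omega)]; omega
    refine ⟨wordOfGaps (gapSeq M r e), partialSums (gapSeq M r e),
      oneDistrib_wordOfGaps fun t => h₀.trans_le (hmono.monotone t.zero_le),
      gapIncreasing_partialSums hmono, gapSeq M r e (r + e + 2) + 1, fun n hn => ?_⟩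
    rw [complexity_wordOfGaps hmono h₀, Nat.cast_add, gapSum_eq (fun _ => gapSeq_add) hmono hn, hC]
    push_cast
    ring
end

section
/- Let w be an infinite binary word whose gap function is non-decreasing. Then 0 ≤ f_w(n+1) - f_w(n) ≤ n + 1 for all n ≥ 1. -/
/-!
A factor of length `n + 1` is a factor of length `n` followed by a letter, so
`f(n + 1) - f(n)` is at most the number of right special factors of length `n`; these are
counted by their number `t ≤ n` of trailing zeros. If `t < n`, a right special factor `u`
followed by `1` ends just before the `K`-th `1`, where the gap `g K` is `t + 1`,, and followed by
`0` it shows an `M`-th `1` with `g (M + 1) > t + 1`; hence `K ≤ M`, and the windows of `w`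
ending at the `(K - 1)`-th and at the `M`-th `1` agree. Near a `1`, the word is read off from
the gaps preceding it, and for `a ≤ c ≤ b` monotonicity squeezes the gaps before the `c`-th
`1` between those before the `a`-th and the `b`-th. So the window at any `1` between the two
agrees as well; comparing two right special factors with the same `n` and `t` at the smaller
of their two indices `K` shows that they coincide.
-/

section Factors

variable {w : ℕ → Fin 2}

lemma factorAt_iff {i : ℕ} {u : List (Fin 2)} :
    FactorAt w i u ↔ ∀ k (hk : k < u.length), u[k] = w (i + k) := by
  refine ⟨fun h k hk => by simp [List.getElem_of_eq h hk], fun h => ?_⟩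
  exact List.ext_getElem (by simp) fun k h₁ _ => by simpa using h k h₁

lemma factorAt_append_singleton_iff {i : ℕ} {u : List (Fin 2)} {c : Fin 2} :
    FactorAt w i (u ++ [c]) ↔ FactorAt w i u ∧ w (i + u.length) = c := by
  simp only [factorAt_iff, List.length_append, List.length_singleton]
  constructor
  · intro h
    refine ⟨fun k hk => ?_, by simpa using (h u.length (by omega)).symm⟩
    simpa [List.getElem_append_left hk] using h k (by omega)
  · rintro ⟨h, hc⟩ k hk
    rcases Nat.lt_or_ge k u.length with hk' | hk'
    · rw [List.getElem_append_left hk', h k hk']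
    · obtain rfl : k = u.length := by omega
      simpa using hc.symm

lemma IsFactor.exists_append_singleton {u : List (Fin 2)} (hu : IsFactor w u) :
    ∃ c, IsFactor w (u ++ [c]) := by
  obtain ⟨i, hi, h⟩ := hu
  exact ⟨w (i + u.length), i, hi, factorAt_append_singleton_iff.2 ⟨h, rfl⟩⟩

lemma IsFactor.of_append {u v : List (Fin 2)} (h : IsFactor w (u ++ v)) :
    IsFactor w u := by
  obtain ⟨i, hi, h⟩ := h
  refine ⟨i, hi, factorAt_iff.2 fun k hk => ?_⟩
  rw [← List.getElem_append_left hk]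
  exact factorAt_iff.1 h k (by simp; omega)

end Factors

lemma finite_setOf_length_eq {α : Type*} [Finite α] (n : ℕ) (p : List α → Prop) :
    {u : List α | u.length = n ∧ p u}.Finite :=
  (List.finite_length_eq α n).subset fun _ hu => hu.1

lemma complexity_le_complexity_succ (w : ℕ → Fin 2) (n : ℕ) :
    complexity w n ≤ complexity w (n + 1) := by
  have hsub : {u | u.length = n ∧ IsFactor w u} ⊆
      List.take n '' {u | u.length = n + 1 ∧ IsFactor w u} := by
    rintro u ⟨rfl, hu⟩
    obtain ⟨c, hc⟩ := hu.exists_append_singleton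
    exact ⟨u ++ [c], ⟨by simp, hc⟩, List.take_left⟩
  exact (Set.ncard_le_ncard hsub ((finite_setOf_length_eq _ _).image _)).trans
    (Set.ncard_image_le (finite_setOf_length_eq _ _))

lemma complexity_succ_le (w : ℕ → Fin 2) (n : ℕ) :
    complexity w (n + 1) ≤
      complexity w n + {u : List (Fin 2) | u.length = n ∧ RightSpecial w u}.ncard := by
  set S : Fin 2 → Set (List (Fin 2)) := fun c => {u | u.length = n ∧ IsFactor w (u ++ [c])}
  have hfin (c : Fin 2) : (S c).Finite := finite_setOf_length_eq _ _
  have hsub : {v : List (Fin 2) | v.length = n + 1 ∧ IsFactor w v} ⊆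
      (· ++ [0]) '' S 0 ∪ (· ++ [1]) '' S 1 := by
    rintro v ⟨hlen, hv⟩
    obtain ⟨u, c, rfl⟩ : ∃ u c, v = u ++ [c] :=
      ⟨v.dropLast, v.getLast (List.ne_nil_of_length_eq_add_one hlen),
        (List.dropLast_append_getLast _).symm⟩
    have hu : u.length = n := by simpa using hlen
    rcases (by omega : c = 0 ∨ c = 1) with rfl | rfl
    exacts [Or.inl ⟨u, ⟨hu, hv⟩, rfl⟩, Or.inr ⟨u, ⟨hu, hv⟩, rfl⟩]
  have hunion : S 0 ∪ S 1 = {u | u.length = n ∧ IsFactor w u} := by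
    ext u
    refine ⟨by rintro (⟨hu, h⟩ | ⟨hu, h⟩) <;> exact ⟨hu, h.of_append⟩, fun ⟨hu, h⟩ => ?_⟩
    obtain ⟨c, hc⟩ := h.exists_append_singleton
    rcases (by omega : c = 0 ∨ c = 1) with rfl | rfl
    exacts [Or.inl ⟨hu, hc⟩, Or.inr ⟨hu, hc⟩]
  have hinter : S 0 ∩ S 1 = {u | u.length = n ∧ RightSpecial w u} := by
    ext u
    exact ⟨fun ⟨⟨hu, h₀⟩, _, h₁⟩ => ⟨hu, h₀, h₁⟩, fun ⟨hu, h₀, h₁⟩ => ⟨⟨hu, h₀⟩, hu, h₁⟩⟩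
  calc complexity w (n + 1)
      ≤ ((· ++ [0]) '' S 0 ∪ (· ++ [1]) '' S 1).ncard :=
        Set.ncard_le_ncard hsub (((hfin 0).image _).union ((hfin 1).image _))
    _ ≤ ((· ++ [0]) '' S 0).ncard + ((· ++ [1]) '' S 1).ncard := Set.ncard_union_le _ _
    _ ≤ (S 0).ncard + (S 1).ncard :=
        add_le_add (Set.ncard_image_le (hfin 0)) (Set.ncard_image_le (hfin 1))
    _ = complexity w n + {u : List (Fin 2) | u.length = n ∧ RightSpecial w u}.ncard := by
        rw [← Set.ncard_union_add_ncard_inter _ _ (hfin 0) (hfin 1), hunion, hinter]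
        rfl

def trailingZeros (u : List (Fin 2)) : ℕ := u.reverse.findIdx (· = 1)

lemma trailingZeros_le (u : List (Fin 2)) : trailingZeros u ≤ u.length :=
  u.length_reverse ▸ List.findIdx_le_length

lemma getElem_eq_zero_of_trailingZeros_le {u : List (Fin 2)} {k : ℕ} (hk : k < u.length)
    (h : u.length - trailingZeros u ≤ k) : u[k] = 0 := by
  unfold trailingZeros at h
  have := List.not_of_lt_findIdx (p := (· = (1 : Fin 2))) (xs := u.reverse)
    (i := u.length - 1 - k) (by omega)
  simp only [List.getElem_reverse, Nat.sub_sub_self (show k ≤ u.length - 1 by omega)] at this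
  simp only [decide_eq_false_iff_not] at this
  omega

lemma getElem_trailingZeros_eq_one {u : List (Fin 2)} (h : trailingZeros u < u.length) :
    u[u.length - 1 - trailingZeros u] = 1 := by
  unfold trailingZeros at h ⊢
  have := List.findIdx_getElem (xs := u.reverse) (w := by simpa using h)
  simpa [List.getElem_reverse] using this

section GapMonotone

variable {G : ℕ → ℕ} (hmono : ∀ i, 1 ≤ i → gap G i ≤ gap G (i + 1))
include hmono

lemma gap_le_gap {i j : ℕ} (hi : 1 ≤ i) (hij : i ≤ j) : gap G i ≤ gap G j := by
  induction j, hij using Nat.le_induction with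
  | base => rfl
  | succ j hj ih => exact ih.trans (hmono j (hi.trans hj))

lemma lt_of_gap_lt {i j : ℕ} (hj : 1 ≤ j) (h : gap G i < gap G j) : i < j :=
  lt_of_not_ge fun hji => (gap_le_gap hmono hj hji).not_gt h

lemma sub_le_sub_of_gap_mono (hG : Monotone G) {a c r : ℕ} (hac : a ≤ c) (hra : r ≤ a) :
    G a - G (a - r) ≤ G c - G (c - r) := by
  induction r with
  | zero => simp
  | succ r ih =>
    have hgap := gap_le_gap hmono (i := a - r) (j := c - r) (by omega) (by omega)
    simp only [gap, Nat.sub_sub] at hgap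
    have := hG (show a - (r + 1) ≤ a - r by omega)
    have := hG (show a - r ≤ a by omega)
    have := hG (show c - (r + 1) ≤ c - r by omega)
    have := hG (show c - r ≤ c by omega)
    have := ih (by omega)
    omega

end GapMonotone

namespace OneDistrib

variable {w : ℕ → Fin 2} {G : ℕ → ℕ} (hG : OneDistrib w G)
include hG

lemma apply_G {i : ℕ} (hi : 1 ≤ i) : w (G i) = 1 := by
  have h := hG.2.1 (by omega : 0 < i)
  rw [hG.1] at h
  exact (hG.2.2 _ h).2 ⟨i, hi, rfl⟩

lemma eq_zero_of_lt_of_lt {K p : ℕ} (h₁ : G (K - 1) < p) (h₂ : p < G K) : w p = 0 := by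
  by_contra hp
  obtain ⟨j, -, rfl⟩ := (hG.2.2 p (by omega)).1 (by omega)
  have := hG.2.1.lt_iff_lt.1 h₁
  have := hG.2.1.lt_iff_lt.1 h₂
  omega

lemma G_pred_eq {K q : ℕ} (hq₁ : 1 ≤ q) (hq : w q = 1) (hqK : q < G K)
    (hzero : ∀ p, q < p → p < G K → w p = 0) : G (K - 1) = q := by
  obtain ⟨j, hj, rfl⟩ := (hG.2.2 q hq₁).1 hq
  have hjK : j ≤ K - 1 := by have := hG.2.1.lt_iff_lt.1 hqK; omega
  refine le_antisymm (not_lt.1 fun h => ?_) (hG.2.1.monotone hjK)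
  have := hzero _ h (hG.2.1 (by omega))
  rw [hG.apply_G (by omega)] at this
  exact absurd this (by decide)

lemma lt_G_succ {M q : ℕ} (hzero : ∀ p, G M < p → p ≤ q → w p = 0) : q < G (M + 1) := by
  by_contra! h
  have := hzero _ (hG.2.1 (Nat.lt_succ_self M)) h
  rw [hG.apply_G (by omega)] at this
  exact absurd this (by decide)

lemma sub_eq_one_iff {a s : ℕ} (hs : s < G a) :
    w (G a - s) = 1 ↔ ∃ r ≤ a, G a - G (a - r) = s := by
  constructor
  · intro h
    obtain ⟨j, -, hj⟩ := (hG.2.2 _ (by omega)).1 h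
    have hja : j ≤ a := hG.2.1.le_iff_le.1 (by omega)
    exact ⟨a - j, by omega, by rw [Nat.sub_sub_self hja]; omega⟩
  · rintro ⟨r, -, rfl⟩
    have hr : 1 ≤ a - r := by
      by_contra! h
      obtain h0 : a - r = 0 := by omega
      rw [h0, hG.1] at hs
      omega
    rw [Nat.sub_sub_self (hG.2.1.monotone (Nat.sub_le a r))]
    exact hG.apply_G hr

/-- `K` indexes the `1` right after an occurrence of `u ++ [1]`, `M` the last `1` of `u` in an
occurrence of `u ++ [0]`. -/
lemma exists_of_rightSpecial {u : List (Fin 2)} (hu : RightSpecial w u)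
    (ht : trailingZeros u < u.length) :
    ∃ K M, FactorAt w (G K - u.length) u ∧ gap G K = trailingZeros u + 1 ∧
      trailingZeros u + 1 < gap G (M + 1) ∧ u.length - trailingZeros u ≤ G (K - 1) ∧
      ∀ s < u.length - trailingZeros u, w (G (K - 1) - s) = w (G M - s) := by
  set n := u.length
  set t := trailingZeros u
  obtain ⟨⟨i', hi', h₀⟩, ⟨i, hi, h₁⟩⟩ := hu
  obtain ⟨h₀, hw₀⟩ := factorAt_append_singleton_iff.1 h₀
  obtain ⟨h₁, hw₁⟩ := factorAt_append_singleton_iff.1 h₁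
  have hu₀ := factorAt_iff.1 h₀
  have hu₁ := factorAt_iff.1 h₁
  have hone := getElem_trailingZeros_eq_one ht
  have hzero (k : ℕ) (hk : k < n) (htk : n - t ≤ k) : u[k] = 0 :=
    getElem_eq_zero_of_trailingZeros_le hk htk
  obtain ⟨K, -, hK⟩ := (hG.2.2 _ (by omega)).1 hw₁
  obtain ⟨M, hM, hGM⟩ :=
    (hG.2.2 (i' + (n - 1 - t)) (by omega)).1 (hu₀ (n - 1 - t) (by omega) ▸ hone)
  have hGK : G (K - 1) = i + (n - 1 - t) := by
    refine hG.G_pred_eq (by omega) (hu₁ (n - 1 - t) (by omega) ▸ hone) (by omega)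
      fun p hp hpK => ?_
    obtain ⟨k, rfl⟩ : ∃ k, p = i + k := ⟨p - i, by omega⟩
    exact hu₁ k (by omega) ▸ hzero k (by omega) (by omega)
  have hGM' : i' + n < G (M + 1) := by
    refine hG.lt_G_succ fun p hp hpn => ?_
    obtain ⟨k, rfl⟩ : ∃ k, p = i' + k := ⟨p - i', by omega⟩
    rcases Nat.lt_or_ge k n with hk | hk
    · exact hu₀ k hk ▸ hzero k hk (by omega)
    · rwa [show k = n by omega]
  have := hG.2.1.monotone (Nat.sub_le K 1)
  refine ⟨K, M, by rwa [hK, Nat.add_sub_cancel], by unfold gap; omega,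
    by simp only [gap, Nat.add_sub_cancel]; omega,
    by omega, fun s hs => ?_⟩
  rw [show G (K - 1) - s = i + (n - 1 - t - s) by omega,
    show G M - s = i' + (n - 1 - t - s) by omega, ← hu₁ _ (by omega), ← hu₀ _ (by omega)]

variable (hmono : ∀ i, 1 ≤ i → gap G i ≤ gap G (i + 1))
include hmono

lemma sub_G_eq_of_window_eq {a b T : ℕ} (hab : a ≤ b) (hT : T ≤ G a)
    (hwin : ∀ s < T, w (G a - s) = w (G b - s)) {r : ℕ} (hra : r ≤ a)
    (hr : G a - G (a - r) < T) : G b - G (b - r) = G a - G (a - r) := by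
  induction r with
  | zero => simp
  | succ r ih =>
    have hG' := hG.2.1.monotone
    have := hG' (show a - (r + 1) ≤ a - r by omega)
    have h₁ := ih (by omega) (by omega)
    have hone : w (G b - (G a - G (a - (r + 1)))) = 1 := by
      rw [← hwin _ hr, hG.sub_eq_one_iff (by omega)]
      exact ⟨r + 1, hra, rfl⟩
    obtain ⟨r', hr'b, hr'⟩ := (hG.sub_eq_one_iff (by have := hG' hab; omega)).1 hone
    have hlt := hG.2.1 (show a - (r + 1) < a - r by omega)
    have hrr' : r + 1 ≤ r' := by
      by_contra! h
      have := hG' (show b - r ≤ b - r' by omega)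
      have := hG' (show a - r ≤ a by omega)
      omega
    have := hG' (show b - r' ≤ b - (r + 1) by omega)
    have := hG' (show b - (r + 1) ≤ b by omega)
    have := sub_le_sub_of_gap_mono hmono hG' hab hra
    omega

lemma window_eq_of_le_of_le {a b c T : ℕ} (hac : a ≤ c) (hcb : c ≤ b) (hT : T ≤ G a)
    (hwin : ∀ s < T, w (G a - s) = w (G b - s)) : ∀ s < T, w (G a - s) = w (G c - s) := by
  have hG' := hG.2.1.monotone
  have hAC := hG' hac
  intro s hs
  suffices w (G a - s) = 1 ↔ w (G c - s) = 1 by omega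
  rw [hG.sub_eq_one_iff (by omega), hG.sub_eq_one_iff (by omega)]
  constructor
  · rintro ⟨r, hra, rfl⟩
    have h₁ := hG.sub_G_eq_of_window_eq hmono (hac.trans hcb) hT hwin hra hs
    have h₂ := sub_le_sub_of_gap_mono hmono hG' hac hra
    have h₃ := sub_le_sub_of_gap_mono hmono hG' hcb (hra.trans hac)
    exact ⟨r, hra.trans hac, by omega⟩
  · rintro ⟨r, hrc, rfl⟩
    rcases Nat.lt_or_ge a r with har | hra
    · have := sub_le_sub_of_gap_mono hmono hG' hac le_rfl
      have := hG' (show c - r ≤ c - a by omega)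
      rw [Nat.sub_self, hG.1] at *
      omega
    · have h₂ := sub_le_sub_of_gap_mono hmono hG' hac hra
      have h₁ := hG.sub_G_eq_of_window_eq hmono (hac.trans hcb) hT hwin hra (by omega)
      have h₃ := sub_le_sub_of_gap_mono hmono hG' hcb (hra.trans hac)
      exact ⟨r, hra, by omega⟩

lemma window_eq_of_gap_eq {n t K K' M : ℕ} (ht : t < n) (hKK' : K ≤ K')
    (hK : gap G K = t + 1) (hK' : gap G K' = t + 1) (hM : t + 1 < gap G (M + 1))
    (hT : n - t ≤ G (K - 1)) (hwin : ∀ s < n - t, w (G (K - 1) - s) = w (G M - s))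
    {k : ℕ} (hk : k < n) : w (G K - n + k) = w (G K' - n + k) := by
  have hG' := hG.2.1.monotone
  have hK'M : K' ≤ M := Nat.lt_succ_iff.1 (lt_of_gap_lt hmono (by omega) (hK' ▸ hM))
  have hK₁ : 1 ≤ K := by
    by_contra h
    simp [show K = 0 by omega, gap] at hK
  have hwin' := hG.window_eq_of_le_of_le hmono (a := K - 1) (b := M) (c := K' - 1)
    (by omega) (by omega) hT hwin
  unfold gap at hK hK'
  have := hG' (Nat.sub_le K 1)
  have := hG' (Nat.sub_le K' 1)
  have := hG' (show K - 1 ≤ K' - 1 by omega)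
  rcases Nat.lt_or_ge k (n - t) with hkt | hkt
  · rw [show G K - n + k = G (K - 1) - (n - t - 1 - k) by omega,
      show G K' - n + k = G (K' - 1) - (n - t - 1 - k) by omega]
    exact hwin' _ (by omega)
  · rw [hG.eq_zero_of_lt_of_lt (K := K) (by omega) (by omega),
      hG.eq_zero_of_lt_of_lt (K := K') (by omega) (by omega)]

lemma eq_of_rightSpecial {u u' : List (Fin 2)} (hu : RightSpecial w u) (hu' : RightSpecial w u')
    (hlen : u.length = u'.length) (ht : trailingZeros u = trailingZeros u') : u = u' := by
  rcases (trailingZeros_le u).lt_or_eq with htn | htn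
  · obtain ⟨K, M, hKu, hK, hM, hT, hwin⟩ := hG.exists_of_rightSpecial hu htn
    obtain ⟨K', M', hKu', hK', hM', hT', hwin'⟩ := hG.exists_of_rightSpecial hu' (by omega)
    rw [← ht] at hK' hM'
    rw [← ht, ← hlen] at hT' hwin'
    rw [FactorAt] at hKu hKu'
    rw [hKu, hKu', ← hlen]
    refine List.map_congr_left fun k hk => ?_
    rw [List.mem_range] at hk
    rcases le_total K K' with hKK' | hK'K
    · exact hG.window_eq_of_gap_eq hmono htn hKK' hK hK' hM hT hwin hk
    · exact (hG.window_eq_of_gap_eq hmono htn hK'K hK' hK hM' hT' hwin' hk).symm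
  · refine List.ext_getElem hlen fun k h₁ h₂ => ?_
    rw [getElem_eq_zero_of_trailingZeros_le h₁ (by omega),
      getElem_eq_zero_of_trailingZeros_le h₂ (by omega)]

lemma ncard_rightSpecial_le (n : ℕ) :
    {u : List (Fin 2) | u.length = n ∧ RightSpecial w u}.ncard ≤ n + 1 := by
  have hmaps : ∀ u ∈ {u : List (Fin 2) | u.length = n ∧ RightSpecial w u},
      trailingZeros u ∈ Set.Iic n := by
    rintro u ⟨rfl, -⟩
    exact trailingZeros_le u
  have hinj : Set.InjOn trailingZeros {u : List (Fin 2) | u.length = n ∧ RightSpecial w u} := by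
    rintro u ⟨hlen, hu⟩ u' ⟨hlen', hu'⟩
    exact hG.eq_of_rightSpecial hmono hu hu' (hlen.trans hlen'.symm)
  simpa using Set.ncard_le_ncard_of_injOn trailingZeros hmaps hinj (Set.finite_Iic n)

end OneDistrib

theorem stmt17_general (w : ℕ → Fin 2) (G : ℕ → ℕ) (hG : OneDistrib w G)
    (hmono : ∀ i, 1 ≤ i → gap G i ≤ gap G (i + 1))
    (n : ℕ) :
    complexity w n ≤ complexity w (n + 1) ∧
    complexity w (n + 1) ≤ complexity w n + (n + 1) :=
  ⟨complexity_le_complexity_succ w n,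
    (complexity_succ_le w n).trans (Nat.add_le_add_left (hG.ncard_rightSpecial_le hmono n) _)⟩

theorem stmt17 (w : ℕ → Fin 2) (G : ℕ → ℕ) (hG : OneDistrib w G)
    (hmono : ∀ i, 1 ≤ i → gap G i ≤ gap G (i + 1))
    (n : ℕ) (hn : 1 ≤ n) :
    complexity w n ≤ complexity w (n + 1) ∧
    complexity w (n + 1) ≤ complexity w n + (n + 1) :=
  stmt17_general w G hG hmono n
end
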